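/- arXiv:2402.06920 — 4 statements merged into one kernel-verified Lean document; each statement's English description precedes it below -/
import Mathlib

section
/- Let N be a positive integer and P a probability measure. Suppose S is a test martingale with respect to a sub-filtration (F'_n) of the natural filtration (F_n) (i.e., F'_n ⊆ F_n for all n), with each S_n F_n-measurable. Define S̃_N := S_N and S̃_n := E[S̃_{n+1} | F_n] for n < N. Then S̃ is a test martingale with respect to (F_n) and S̃_N = S_N. -/
open MeasureTheory Filter

/-!
Unwinding the recursion with the tower property gives `T n = 𝔼[S N | ℱ n]` almost surely for
`n ≤ N`, so `T` is the Doob martingale of `S N` up to the horizon: it is nonnegative because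
`S N` is, and `T 0 = 𝔼[S N]` because `ℱ 0` is trivial. The expectation of `S N` equals that of
`S 0 = 1`, since `S` is a martingale for `ℱ'`.
-/

theorem MeasureTheory.Martingale.integral_eq {Ω : Type*} {m0 : MeasurableSpace Ω}
    {μ : Measure Ω} [IsFiniteMeasure μ] {ℱ : Filtration ℕ m0} {S : ℕ → Ω → ℝ}
    (hS : Martingale S ℱ μ) {m n : ℕ} (hmn : m ≤ n) :
    ∫ ω, S m ω ∂μ = ∫ ω, S n ω ∂μ := by
  rw [← integral_congr_ae (hS.condExp_ae_eq hmn), integral_condExp (ℱ.le m)]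

section BackwardRecursion

variable {Ω : Type*} {m0 : MeasurableSpace Ω} {μ : Measure Ω}
  {ℱ : Filtration ℕ m0} {N : ℕ} {T : ℕ → Ω → ℝ}

theorem stronglyMeasurable_of_condExp_succ (hTN : StronglyMeasurable[ℱ N] (T N))
    (hTrec : ∀ n < N, T n = μ[T (n + 1) | ℱ n]) {n : ℕ} (hn : n ≤ N) :
    StronglyMeasurable[ℱ n] (T n) := by
  rcases hn.eq_or_lt with rfl | hlt
  · exact hTN
  · rw [hTrec n hlt]
    exact stronglyMeasurable_condExp

theorem ae_eq_condExp_of_condExp_succ [IsFiniteMeasure μ] (hTN : StronglyMeasurable[ℱ N] (T N))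
    (hTN_int : Integrable (T N) μ) (hTrec : ∀ n < N, T n = μ[T (n + 1) | ℱ n]) {n : ℕ}
    (hn : n ≤ N) : T n =ᵐ[μ] μ[T N | ℱ n] := by
  induction hn using Nat.decreasingInduction with
  | self => rw [condExp_of_stronglyMeasurable (ℱ.le N) hTN hTN_int]
  | of_succ k hk ih =>
    calc T k = μ[T (k + 1) | ℱ k] := hTrec k hk
      _ =ᵐ[μ] μ[μ[T N | ℱ (k + 1)] | ℱ k] := condExp_congr_ae ih
      _ =ᵐ[μ] μ[T N | ℱ k] := condExp_condExp_of_le (ℱ.mono k.le_succ) (ℱ.le (k + 1))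

theorem condExp_ae_eq_of_condExp_succ [IsFiniteMeasure μ] (hTN : StronglyMeasurable[ℱ N] (T N))
    (hTN_int : Integrable (T N) μ) (hTrec : ∀ n < N, T n = μ[T (n + 1) | ℱ n]) {m n : ℕ}
    (hmn : m ≤ n) (hn : n ≤ N) :
    μ[T n | ℱ m] =ᵐ[μ] T m := by
  calc μ[T n | ℱ m]
      _ =ᵐ[μ] μ[μ[T N | ℱ n] | ℱ m] :=
        condExp_congr_ae (ae_eq_condExp_of_condExp_succ hTN hTN_int hTrec hn)
      _ =ᵐ[μ] μ[T N | ℱ m] := condExp_condExp_of_le (ℱ.mono hmn) (ℱ.le n)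
      _ =ᵐ[μ] T m := (ae_eq_condExp_of_condExp_succ hTN hTN_int hTrec (hmn.trans hn)).symm

theorem nonneg_of_condExp_succ [IsFiniteMeasure μ] (hTN : StronglyMeasurable[ℱ N] (T N))
    (hTN_int : Integrable (T N) μ) (hTrec : ∀ n < N, T n = μ[T (n + 1) | ℱ n])
    (hTN_nonneg : 0 ≤ᵐ[μ] T N) {n : ℕ} (hn : n ≤ N) :
    0 ≤ᵐ[μ] T n :=
  (condExp_nonneg hTN_nonneg).trans_eq
    (ae_eq_condExp_of_condExp_succ hTN hTN_int hTrec hn).symm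

theorem zero_ae_eq_integral_of_condExp_succ [IsProbabilityMeasure μ]
    (hTN : StronglyMeasurable[ℱ N] (T N)) (hTN_int : Integrable (T N) μ)
    (hTrec : ∀ n < N, T n = μ[T (n + 1) | ℱ n])
    (hF0 : ℱ 0 = ⊥) :
    T 0 =ᵐ[μ] fun _ => ∫ ω, T N ω ∂μ := by
  have hT0 := ae_eq_condExp_of_condExp_succ hTN hTN_int hTrec N.zero_le
  rwa [hF0, condExp_bot] at hT0

end BackwardRecursion

theorem stmt1_general {Ω : Type*} {m0 : MeasurableSpace Ω} (μ : Measure Ω) [IsProbabilityMeasure μ]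
    (ℱ ℱ' : Filtration ℕ m0) (hle : ∀ n, ℱ' n ≤ ℱ n) (hF0 : ℱ 0 = ⊥) (N : ℕ)
    (S : ℕ → Ω → ℝ)
    (hS : Martingale S ℱ' μ) (hS0 : S 0 =ᵐ[μ] (fun _ => 1)) (hSnonneg : ∀ n, 0 ≤ᵐ[μ] S n)
    (T : ℕ → Ω → ℝ)
    (hTN : T N = S N)
    (hTrec : ∀ n < N, T n = μ[T (n + 1) | ℱ n]) :
    (∀ n ≤ N, StronglyMeasurable[ℱ n] (T n)) ∧
    (∀ n ≤ N, 0 ≤ᵐ[μ] T n) ∧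
    (∀ m n, m ≤ n → n ≤ N → μ[T n | ℱ m] =ᵐ[μ] T m) ∧
    T 0 =ᵐ[μ] (fun _ => 1) ∧
    T N = S N := by
  have hmeas : StronglyMeasurable[ℱ N] (T N) := hTN ▸ (hS.stronglyMeasurable N).mono (hle N)
  have hint : Integrable (T N) μ := hTN ▸ hS.integrable N
  have hmean : ∫ ω, T N ω ∂μ = 1 := by
    rw [hTN, ← hS.integral_eq N.zero_le, integral_congr_ae hS0]
    simp
  refine ⟨fun n ↦ stronglyMeasurable_of_condExp_succ hmeas hTrec,
    fun n ↦ nonneg_of_condExp_succ hmeas hint hTrec (hTN ▸ hSnonneg N),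
    fun m n ↦ condExp_ae_eq_of_condExp_succ hmeas hint hTrec, ?_, hTN⟩
  simpa only [hmean] using zero_ae_eq_integral_of_condExp_succ hmeas hint hTrec hF0

/-- Finite-horizon version of Proposition 1: a test martingale `S` w.r.t. a sub-filtration
`ℱ'` of the natural filtration `ℱ` can be matched at the horizon `N` by a test martingale
`T` w.r.t. `ℱ`, obtained by backward averaging. -/
theorem stmt1 {Ω : Type*} {m0 : MeasurableSpace Ω} (μ : Measure Ω) [IsProbabilityMeasure μ]
    (ℱ ℱ' : Filtration ℕ m0) (hle : ∀ n, ℱ' n ≤ ℱ n) (hF0 : ℱ 0 = ⊥) (N : ℕ) (hN : 0 < N)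
    (S : ℕ → Ω → ℝ)
    (hS : Martingale S ℱ' μ) (hS0 : S 0 =ᵐ[μ] (fun _ => 1)) (hSnonneg : ∀ n, 0 ≤ᵐ[μ] S n)
    (T : ℕ → Ω → ℝ)
    (hTN : T N = S N)
    (hTrec : ∀ n < N, T n = μ[T (n + 1) | ℱ n]) :
    (∀ n ≤ N, StronglyMeasurable[ℱ n] (T n)) ∧
    (∀ n ≤ N, 0 ≤ᵐ[μ] T n) ∧
    (∀ m n, m ≤ n → n ≤ N → μ[T n | ℱ m] =ᵐ[μ] T m) ∧
    T 0 =ᵐ[μ] (fun _ => 1) ∧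
    T N = S N :=
  stmt1_general μ ℱ ℱ' hle hF0 N S hS hS0 hSnonneg T hTN hTrec
end

section
/- Let μ ∈ ℝ, and let f: ℝ → [0,∞) be a measurable function satisfying f(z) ≥ max( N(μ,1)([z−1, z+1]) / N(0,2)([−1,1]), 1 ) for all z ∈ ℝ. Then ∫ f dN(μ,1) > 1. -/
/-!
Standardising both measures,
`N(0,2)([-1,1]) = N(0,1)([-1/√2, 1/√2]) < N(0,1)([-4/5, 4/5]) = N(μ,1)([μ-4/5, μ+4/5])`
since `1/√2 < 4/5`. For `|z - μ| ≤ 1/5` the window `[z-1, z+1]` contains `[μ-4/5, μ+4/5]`,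
so there `f` is bounded below by a constant `r > 1`; as `f ≥ 1` everywhere and `N(μ,1)`
charges that neighbourhood of `μ`, the integral exceeds `1`.
-/

open MeasureTheory ProbabilityTheory Set
open scoped ENNReal NNReal

lemma gaussianReal_eq_map_std (μ : ℝ) (v : ℝ≥0) :
    gaussianReal μ v = (gaussianReal 0 1).map (fun x ↦ √v * x + μ) := by
  rw [show (fun x ↦ √v * x + μ) = (· + μ) ∘ (√v * ·) from rfl,
    ← Measure.map_map (measurable_add_const μ) (measurable_const_mul _),
    gaussianReal_map_const_mul, gaussianReal_map_add_const]
  congr 1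
  · simp
  · ext; simp

lemma gaussianReal_Icc_eq_std (μ : ℝ) {v : ℝ≥0} (hv : v ≠ 0) (a b : ℝ) :
    gaussianReal μ v (Icc a b) = gaussianReal 0 1 (Icc ((a - μ) / √v) ((b - μ) / √v)) := by
  have hsqrt : 0 < √(v : ℝ) := Real.sqrt_pos.mpr (by positivity)
  rw [gaussianReal_eq_map_std, Measure.map_apply (by fun_prop) measurableSet_Icc,
    ← preimage_const_mul_Icc₀ _ _ hsqrt, ← preimage_add_const_Icc, ← preimage_comp]
  rfl

lemma gaussianReal_ne_zero_of_volume_ne_zero (μ : ℝ) {v : ℝ≥0} (hv : v ≠ 0) {s : Set ℝ}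
    (hs : volume s ≠ 0) : gaussianReal μ v s ≠ 0 :=
  fun h ↦ hs (gaussianReal_absolutelyContinuous' μ hv h)

lemma gaussianReal_Icc_lt_Icc (μ : ℝ) {v : ℝ≥0} (hv : v ≠ 0) {a b a' b' : ℝ}
    (ha : a' ≤ a) (hab : a ≤ b) (hb : b < b') :
    gaussianReal μ v (Icc a b) < gaussianReal μ v (Icc a' b') :=
  calc gaussianReal μ v (Icc a b)
      < gaussianReal μ v (Icc a b) + gaussianReal μ v (Ioc b b') :=
        ENNReal.lt_add_right (measure_ne_top _ _)
          (gaussianReal_ne_zero_of_volume_ne_zero μ hv (by simpa using hb))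
    _ = gaussianReal μ v (Icc a b') := by
        rw [← Icc_union_Ioc_eq_Icc hab hb.le, measure_union
          ((Iic_disjoint_Ioc le_rfl).mono_left Icc_subset_Iic_self) measurableSet_Ioc]
    _ ≤ gaussianReal μ v (Icc a' b') := measure_mono (Icc_subset_Icc_left ha)

lemma gaussianReal_zero_two_Icc_lt (μ : ℝ) :
    gaussianReal 0 2 (Icc (-1) 1) < gaussianReal μ 1 (Icc (μ - 4 / 5) (μ + 4 / 5)) := by
  have h : 1 / √2 < 4 / 5 := by
    rw [div_lt_iff₀ (by positivity)]
    nlinarith [Real.sq_sqrt (zero_le_two : (0 : ℝ) ≤ 2), Real.sqrt_nonneg 2]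
  rw [gaussianReal_Icc_eq_std 0 two_ne_zero, gaussianReal_Icc_eq_std μ one_ne_zero]
  simp only [sub_zero, NNReal.coe_one, NNReal.coe_ofNat, Real.sqrt_one, div_one,
    sub_sub_cancel_left, add_sub_cancel_left, neg_div]
  have h0 : 0 < 1 / √2 := by positivity
  exact gaussianReal_Icc_lt_Icc 0 one_ne_zero (by linarith) (by linarith) h

theorem one_lt_lintegral_of_ae_one_le_of_ae_le_on {α : Type*} [MeasurableSpace α]
    {ν : Measure α} [IsProbabilityMeasure ν] {g : α → ℝ≥0∞} {s : Set α} {c : ℝ≥0∞}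
    (hs : MeasurableSet s) (hνs : ν s ≠ 0) (hc : 1 < c) (hg1 : ∀ᵐ x ∂ν, 1 ≤ g x)
    (hgc : ∀ᵐ x ∂ν, x ∈ s → c ≤ g x) :
    1 < ∫⁻ x, g x ∂ν := by
  classical
  calc 1 = ∫⁻ _, 1 ∂ν := by simp
    _ < ∫⁻ x, s.piecewise (fun _ ↦ c) 1 x ∂ν :=
        lintegral_strict_mono_of_ae_le_of_ae_lt_on
          (measurable_const.piecewise hs measurable_const).aemeasurable (by simp)
          (ae_of_all _ fun x ↦ by by_cases hx : x ∈ s <;> simp [hx, hc.le]) hνs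
          (ae_of_all _ fun x hx ↦ by simpa [hx] using hc)
    _ ≤ ∫⁻ x, g x ∂ν := lintegral_mono_ae <| by
        filter_upwards [hg1, hgc] with x hx1 hxc
        by_cases hx : x ∈ s <;> simp [hx, hx1, hxc]

theorem stmt11_general (μ : ℝ) (f : ℝ → ℝ)
    (hdom : ∀ z : ℝ,
      max ((gaussianReal μ 1 (Set.Icc (z - 1) (z + 1))).toReal /
          (gaussianReal 0 2 (Set.Icc (-1 : ℝ) 1)).toReal) 1 ≤ f z) :
    1 < ∫⁻ z, ENNReal.ofReal (f z) ∂(gaussianReal μ 1) := by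
  set c := gaussianReal 0 2 (Icc (-1 : ℝ) 1)
  set m := gaussianReal μ 1 (Icc (μ - 4 / 5) (μ + 4 / 5))
  have hc : 0 < c.toReal := ENNReal.toReal_pos
    (gaussianReal_ne_zero_of_volume_ne_zero 0 two_ne_zero (by norm_num)) (measure_ne_top _ _)
  have hr : 1 < m.toReal / c.toReal := (one_lt_div hc).mpr <|
    (ENNReal.toReal_lt_toReal (measure_ne_top _ _) (measure_ne_top _ _)).mpr
      (gaussianReal_zero_two_Icc_lt μ)
  have hf_near : ∀ z ∈ Icc (μ - 1 / 5) (μ + 1 / 5), m.toReal / c.toReal ≤ f z := by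
    intro z hz
    refine le_trans ?_ ((le_max_left _ _).trans (hdom z))
    gcongr
    · exact measure_ne_top _ _
    · exact measure_mono (Icc_subset_Icc (by linarith [hz.2]) (by linarith [hz.1]))
  exact one_lt_lintegral_of_ae_one_le_of_ae_le_on measurableSet_Icc
    (gaussianReal_ne_zero_of_volume_ne_zero μ one_ne_zero (by norm_num))
    (ENNReal.one_lt_ofReal.mpr hr)
    (ae_of_all _ fun z ↦ ENNReal.one_le_ofReal.mpr ((le_max_right _ _).trans (hdom z)))
    (ae_of_all _ fun z hz ↦ ENNReal.ofReal_le_ofReal (hf_near z hz))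

/-- Key step in Section 5.1: any measurable nonnegative `f` dominating both `1` and
`z ↦ N(μ,1)([z−1,z+1]) / N(0,2)([−1,1])` has `N(μ,1)`-integral strictly greater than 1. -/
theorem stmt11 (μ : ℝ) (f : ℝ → ℝ) (hf : Measurable f) (hf0 : ∀ z, 0 ≤ f z)
    (hdom : ∀ z : ℝ,
      max ((gaussianReal μ 1 (Set.Icc (z - 1) (z + 1))).toReal /
          (gaussianReal 0 2 (Set.Icc (-1 : ℝ) 1)).toReal) 1 ≤ f z) :
    1 < ∫⁻ z, ENNReal.ofReal (f z) ∂(gaussianReal μ 1) :=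
  stmt11_general μ f hdom
end

section
/- Let N, N0, N1, K, k0, k1, π0, π1 be as in the changepoint setting with k0 + k1 = K. Then the conditional probability under Q of a specific sequence z (with k0 ones in the first block and k1 in the second) given that the total number of ones is K equals 1 / ( Σ_{k=max(K−N0,0)}^{min(K,N1)} C(N0, K−k) C(N1, k) ρ^{k−k1} ), where ρ := (1−π0)π1 / (π0(1−π1)). -/
open MeasureTheory ProbabilityTheory Finset
open scoped NNReal ENNReal

set_option linter.deprecated false

/-!
Under `Q` the probability of a sequence `w` depends only on its numbers of ones `a` and `b` in
the two blocks: it is `π₀^a (1-π₀)^(N₀-a) π₁^b (1-π₁)^(N₁-b)`, and exactly `C(N₀,a) C(N₁,b)`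
sequences share these counts. On the event of `K` ones we have `a = K - b`, and the weight of the
counts `(K - k, k)` is `ρ^(k - k₁)` times the weight of `z`, since trading a one of the first block
for a one of the second multiplies the weight by `ρ`. Hence
`Q(K ones) = Q{z} · Σ_k C(N₀,K-k) C(N₁,k) ρ^(k-k₁)`, and the conditional probability of `z` is the
reciprocal of the sum.
-/

def binomialWeight {M : Type*} [Monoid M] (p q : M) (n k : ℕ) : M := p ^ k * q ^ (n - k)

def oddsRatio {α : Type*} [One α] [Sub α] [Mul α] [Div α] (π₀ π₁ : α) : α :=
  (1 - π₀) * π₁ / (π₀ * (1 - π₁))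

section Semifield
variable {α : Type*} [Semifield α]

theorem binomialWeight_eq_pow_mul_div_pow {p q : α} (hq : q ≠ 0) {n k : ℕ} (hk : k ≤ n) :
    binomialWeight p q n k = q ^ n * (p / q) ^ k := by
  rw [binomialWeight, div_pow, pow_sub₀ q hq hk]
  field_simp

theorem binomialWeight_sub_mul_binomialWeight_eq_mul_pow {p₀ q₀ p₁ q₁ : α} (hp₀ : p₀ ≠ 0)
    (hq₀ : q₀ ≠ 0) (hq₁ : q₁ ≠ 0) {n₀ n₁ K k : ℕ} (hkK : k ≤ K) (hk : k ≤ n₁) (hKk : K - k ≤ n₀) :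
    binomialWeight p₀ q₀ n₀ (K - k) * binomialWeight p₁ q₁ n₁ k =
      q₀ ^ n₀ * q₁ ^ n₁ * (p₀ / q₀) ^ K * (q₀ * p₁ / (p₀ * q₁)) ^ k := by
  rw [binomialWeight_eq_pow_mul_div_pow hq₀ hKk, binomialWeight_eq_pow_mul_div_pow hq₁ hk,
    pow_sub₀ _ (div_ne_zero hp₀ hq₀) hkK]
  have hratio : p₁ / q₁ = p₀ / q₀ * (q₀ * p₁ / (p₀ * q₁)) := by field_simp
  rw [hratio, mul_pow]
  field_simp

theorem binomialWeight_sub_mul_binomialWeight_eq_zpow_mul {p₀ q₀ p₁ q₁ : α} (hp₀ : p₀ ≠ 0)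
    (hq₀ : q₀ ≠ 0) (hp₁ : p₁ ≠ 0) (hq₁ : q₁ ≠ 0) {n₀ n₁ K k k' : ℕ}
    (hkK : k ≤ K) (hk : k ≤ n₁) (hKk : K - k ≤ n₀)
    (hkK' : k' ≤ K) (hk' : k' ≤ n₁) (hKk' : K - k' ≤ n₀) :
    binomialWeight p₀ q₀ n₀ (K - k) * binomialWeight p₁ q₁ n₁ k =
      (q₀ * p₁ / (p₀ * q₁)) ^ ((k : ℤ) - k') *
        (binomialWeight p₀ q₀ n₀ (K - k') * binomialWeight p₁ q₁ n₁ k') := by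
  rw [binomialWeight_sub_mul_binomialWeight_eq_mul_pow hp₀ hq₀ hq₁ hkK hk hKk,
    binomialWeight_sub_mul_binomialWeight_eq_mul_pow hp₀ hq₀ hq₁ hkK' hk' hKk',
    zpow_sub₀ (by positivity), zpow_natCast, zpow_natCast]
  field_simp

end Semifield

theorem NNReal.oddsRatio_pos {π₀ π₁ : ℝ≥0} (hπ₀ : 0 < π₀) (hπ₀' : π₀ < 1) (hπ₁ : 0 < π₁)
    (hπ₁' : π₁ < 1) : 0 < oddsRatio π₀ π₁ := by
  have := tsub_pos_of_lt hπ₀'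
  have := tsub_pos_of_lt hπ₁'
  rw [oddsRatio]
  positivity

theorem ENNReal.coe_oddsRatio {π₀ π₁ : ℝ≥0} (hπ₀ : 0 < π₀) (hπ₁' : π₁ < 1) :
    ((oddsRatio π₀ π₁ : ℝ≥0) : ℝ≥0∞) = oddsRatio (π₀ : ℝ≥0∞) π₁ := by
  have := tsub_pos_of_lt hπ₁'
  rw [oddsRatio, oddsRatio, ENNReal.coe_div (by positivity)]
  simp [ENNReal.coe_sub]

theorem Finset.prod_cond_eq_binomialWeight {ι M : Type*} [CommMonoid M] (s : Finset ι)
    (w : ι → Bool) (p q : M) :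
    ∏ i ∈ s, cond (w i) p q = binomialWeight p q #s #{i ∈ s | w i = true} := by
  rw [binomialWeight, ← card_filter_add_card_filter_not (s := s) (fun i => w i = true),
    Nat.add_sub_cancel_left, ← prod_filter_mul_prod_filter_not s (fun i => w i = true)]
  congr 1
  · exact prod_eq_pow_card fun i hi => by simp [(mem_filter.1 hi).2]
  · exact prod_eq_pow_card fun i hi => by simp [(mem_filter.1 hi).2]

theorem Fin.card_filter_not_val_lt_add (m n : ℕ) : #{i : Fin (m + n) | ¬ (i : ℕ) < m} = n := by
  have := card_filter_add_card_filter_not (s := univ) fun i : Fin (m + n) => (i : ℕ) < m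
  rw [Fin.card_filter_val_lt, card_univ, Fintype.card_fin] at this
  omega

section Blocks
variable {ι : Type*} [Fintype ι] (P : ι → Prop) [DecidablePred P]

def blockOnes (w : ι → Bool) : ℕ := #{i | P i ∧ w i = true}

theorem card_true_eq_blockOnes_add (w : ι → Bool) :
    #{i | w i = true} = blockOnes P w + blockOnes (¬ P ·) w := by
  rw [← card_filter_add_card_filter_not (s := {i | w i = true}) P, blockOnes, blockOnes,
    filter_filter, filter_filter]
  simp only [and_comm]

theorem blockOnes_le (w : ι → Bool) : blockOnes P w ≤ #{i | P i} :=
  card_le_card fun i hi => by simp_all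

theorem card_filter_blockOnes_eq [DecidableEq ι] (A B : ℕ) :
    #{w : ι → Bool | blockOnes P w = A ∧ blockOnes (¬ P ·) w = B} =
      (#{i | P i}).choose A * (#{i | ¬ P i}).choose B := by
  have filter_union {s t : Finset ι} (hs : s ⊆ ({i | P i} : Finset ι))
      (ht : t ⊆ ({i | ¬ P i} : Finset ι)) :
      ({i | P i ∧ decide (i ∈ s ∨ i ∈ t) = true} : Finset ι) = s ∧
        ({i | ¬ P i ∧ decide (i ∈ s ∨ i ∈ t) = true} : Finset ι) = t := by
    simp only [subset_iff, mem_filter, mem_univ, true_and] at hs ht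
    constructor <;> ext i <;> simp only [mem_filter, mem_univ, true_and, decide_eq_true_eq] <;>
      grind
  rw [← card_powersetCard, ← card_powersetCard, ← card_product]
  refine card_nbij'
    (fun w => (({i | P i ∧ w i = true} : Finset ι), ({i | ¬ P i ∧ w i = true} : Finset ι)))
    (fun st i => decide (i ∈ st.1 ∨ i ∈ st.2)) ?_ ?_ ?_ ?_
  · intro w hw
    simp_all [blockOnes, subset_iff]
  · rintro ⟨s, t⟩ hst
    simp only [coe_product, Set.mem_prod, mem_coe, mem_powersetCard] at hst
    obtain ⟨⟨hs, rfl⟩, ht, rfl⟩ := hst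
    simp only [coe_filter, Set.mem_ofPred_eq, mem_univ, true_and, blockOnes,
      (filter_union hs ht).1, (filter_union hs ht).2, and_self]
  · intro w _
    funext i
    by_cases hi : P i <;> cases h : w i <;> simp [hi, h]
  · rintro ⟨s, t⟩ hst
    simp only [coe_product, Set.mem_prod, mem_coe, mem_powersetCard] at hst
    exact Prod.ext (filter_union hst.1.1 hst.2.1).1 (filter_union hst.1.1 hst.2.1).2

theorem sum_filter_card_true_eq_sum_choose {M : Type*} [AddCommMonoid M] [DecidableEq ι]
    (F : ℕ → ℕ → M) (K : ℕ) :
    ∑ w : ι → Bool with #{i | w i = true} = K, F (blockOnes P w) (blockOnes (¬ P ·) w) =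
      ∑ k ∈ Icc (K - #{i | P i}) (min K #{i | ¬ P i}),
        ((#{i | P i}).choose (K - k) * (#{i | ¬ P i}).choose k) • F (K - k) k := by
  rw [← sum_fiberwise_of_maps_to (g := blockOnes (¬ P ·)) (t := Icc _ _)]
  · refine sum_congr rfl fun k hk => ?_
    have hkK : k ≤ K := (mem_Icc.1 hk).2.trans (min_le_left _ _)
    have hfiber : ({w | #{i | w i = true} = K ∧ blockOnes (¬ P ·) w = k} : Finset (ι → Bool)) =
        ({w | blockOnes P w = K - k ∧ blockOnes (¬ P ·) w = k} : Finset (ι → Bool)) :=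
      filter_congr fun w _ => by rw [card_true_eq_blockOnes_add P w]; omega
    rw [filter_filter, hfiber, ← card_filter_blockOnes_eq, ← sum_const]
    exact sum_congr rfl fun w hw => by rw [(mem_filter.1 hw).2.1, (mem_filter.1 hw).2.2]
  · intro w hw
    have := blockOnes_le P w
    have := blockOnes_le (¬ P ·) w
    have := card_true_eq_blockOnes_add P w
    simp only [mem_filter, mem_univ, true_and, mem_Icc] at hw ⊢
    omega

theorem blockOnes_compl_le_of_card_true_eq {z : ι → Bool} {K : ℕ}
    (hz : #{i | z i = true} = K) : blockOnes (¬ P ·) z ≤ K :=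
  hz ▸ card_true_eq_blockOnes_add P z ▸ le_add_self

theorem blockOnes_eq_sub_of_card_true_eq {z : ι → Bool} {K : ℕ}
    (hz : #{i | z i = true} = K) : blockOnes P z = K - blockOnes (¬ P ·) z := by
  rw [← hz, card_true_eq_blockOnes_add P z, Nat.add_sub_cancel]

noncomputable def oddsRatioSum (π₀ π₁ : ℝ≥0) (K k₁ : ℕ) : ℝ≥0 :=
  ∑ k ∈ Icc (K - #{i | P i}) (min K #{i | ¬ P i}),
    ((#{i | P i}).choose (K - k) * (#{i | ¬ P i}).choose k : ℝ≥0) *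
      oddsRatio π₀ π₁ ^ ((k : ℤ) - k₁)

theorem oddsRatioSum_ne_zero (π₀ π₁ : ℝ≥0) {z : ι → Bool} {K : ℕ}
    (hz : #{i | z i = true} = K) : oddsRatioSum P π₀ π₁ K (blockOnes (¬ P ·) z) ≠ 0 := by
  have hzK := blockOnes_eq_sub_of_card_true_eq P hz
  have hz₀ := blockOnes_le P z
  have hz₁ := blockOnes_le (¬ P ·) z
  have hz₁K := blockOnes_compl_le_of_card_true_eq P hz
  intro h
  have hterm := sum_eq_zero_iff.1 h _ (mem_Icc.2 ⟨by omega, le_min hz₁K hz₁⟩)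
  simp only [sub_self, zpow_zero, mul_one, ← hzK, mul_eq_zero, Nat.cast_eq_zero,
    Nat.choose_eq_zero_iff] at hterm
  omega

end Blocks

section TwoBlockBernoulli
variable {ι : Type*} [Fintype ι] (P : ι → Prop) [DecidablePred P]

noncomputable def twoBlockBernoulli (π₀ π₁ : ℝ≥0) (h₀ : π₀ ≤ 1) (h₁ : π₁ ≤ 1) :
    Measure (ι → Bool) :=
  Measure.pi fun i =>
    if P i then (PMF.bernoulli π₀ h₀).toMeasure else (PMF.bernoulli π₁ h₁).toMeasure

variable {π₀ π₁ : ℝ≥0} (h₀ : π₀ ≤ 1) (h₁ : π₁ ≤ 1)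

theorem twoBlockBernoulli_singleton (w : ι → Bool) :
    twoBlockBernoulli P π₀ π₁ h₀ h₁ {w} =
      ↑(binomialWeight π₀ (1 - π₀) #{i | P i} (blockOnes P w) *
        binomialWeight π₁ (1 - π₁) #{i | ¬ P i} (blockOnes (¬ P ·) w)) := by
  have (i : ι) : IsProbabilityMeasure
      (if P i then (PMF.bernoulli π₀ h₀).toMeasure else (PMF.bernoulli π₁ h₁).toMeasure) := by
    split_ifs <;> infer_instance
  have hfactor (i : ι) :
      (if P i then (PMF.bernoulli π₀ h₀).toMeasure else (PMF.bernoulli π₁ h₁).toMeasure) {w i} =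
        ↑(if P i then cond (w i) π₀ (1 - π₀) else cond (w i) π₁ (1 - π₁)) := by
    split_ifs <;>
      rw [PMF.toMeasure_apply_singleton _ _ (measurableSet_singleton _), PMF.bernoulli_apply]
  rw [twoBlockBernoulli, Measure.pi_singleton, prod_congr rfl fun i _ => hfactor i,
    ← ENNReal.coe_finset_prod, prod_ite, prod_cond_eq_binomialWeight,
    prod_cond_eq_binomialWeight, filter_filter, filter_filter]
  rfl

theorem twoBlockBernoulli_card_true_eq [DecidableEq ι] (hπ₀ : 0 < π₀) (hπ₀' : π₀ < 1)
    (hπ₁ : 0 < π₁) (hπ₁' : π₁ < 1) {z : ι → Bool} {K : ℕ} (hz : #{i | z i = true} = K) :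
    twoBlockBernoulli P π₀ π₁ h₀ h₁ {w | #{i | w i = true} = K} =
      oddsRatioSum P π₀ π₁ K (blockOnes (¬ P ·) z) * twoBlockBernoulli P π₀ π₁ h₀ h₁ {z} := by
  have hzK := blockOnes_eq_sub_of_card_true_eq P hz
  have hz₀ := blockOnes_le P z
  have hz₁ := blockOnes_le (¬ P ·) z
  have hz₁K := blockOnes_compl_le_of_card_true_eq P hz
  have hS : {w : ι → Bool | #{i | w i = true} = K} =
      ↑({w | #{i | w i = true} = K} : Finset (ι → Bool)) := by
    simp
  rw [hS, ← sum_measure_singleton]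
  simp only [twoBlockBernoulli_singleton]
  rw [← ENNReal.coe_finset_sum, ← ENNReal.coe_mul, sum_filter_card_true_eq_sum_choose P
    (fun a b => binomialWeight π₀ (1 - π₀) #{i | P i} a *
      binomialWeight π₁ (1 - π₁) #{i | ¬ P i} b) K, oddsRatioSum, sum_mul]
  congr 1
  refine sum_congr rfl fun k hk => ?_
  obtain ⟨hk₀, hk₁⟩ := mem_Icc.1 hk
  rw [nsmul_eq_mul, Nat.cast_mul, hzK, oddsRatio,
    binomialWeight_sub_mul_binomialWeight_eq_zpow_mul hπ₀.ne' (tsub_pos_of_lt hπ₀').ne' hπ₁.ne'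
      (tsub_pos_of_lt hπ₁').ne' (hk₁.trans (min_le_left _ _)) (hk₁.trans (min_le_right _ _))
      (by omega) (by omega) hz₁ (by omega)]
  ring

theorem twoBlockBernoulli_cond_singleton [DecidableEq ι] (hπ₀ : 0 < π₀) (hπ₀' : π₀ < 1)
    (hπ₁ : 0 < π₁) (hπ₁' : π₁ < 1) {z : ι → Bool} {K : ℕ} (hz : #{i | z i = true} = K) :
    (twoBlockBernoulli P π₀ π₁ h₀ h₁)[|{w | #{i | w i = true} = K}] {z} =
      1 / oddsRatioSum P π₀ π₁ K (blockOnes (¬ P ·) z) := by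
  have hz₀ : twoBlockBernoulli P π₀ π₁ h₀ h₁ {z} ≠ 0 := by
    have := tsub_pos_of_lt hπ₀'
    have := tsub_pos_of_lt hπ₁'
    rw [twoBlockBernoulli_singleton, binomialWeight, binomialWeight]
    positivity
  have hz_top : twoBlockBernoulli P π₀ π₁ h₀ h₁ {z} ≠ ∞ := by
    rw [twoBlockBernoulli_singleton]
    exact ENNReal.coe_ne_top
  have hzS : {z} ⊆ {w : ι → Bool | #{i | w i = true} = K} := Set.singleton_subset_iff.2 hz
  rw [cond_apply (Set.toFinite _).measurableSet, Set.inter_eq_self_of_subset_right hzS,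
    twoBlockBernoulli_card_true_eq P h₀ h₁ hπ₀ hπ₀' hπ₁ hπ₁' hz,
    ENNReal.mul_inv (.inl (ENNReal.coe_ne_zero.2 (oddsRatioSum_ne_zero P π₀ π₁ hz)))
      (.inl ENNReal.coe_ne_top),
    mul_assoc, ENNReal.inv_mul_cancel hz₀ hz_top, mul_one, one_div]

end TwoBlockBernoulli

/-- Batch benchmark formula of Section 7: under the changepoint alternative `Q`, the
conditional probability of a specific sequence `z` (with `k0` ones in the first block and
`k1` in the second, `k0 + k1 = K`) given that the total number of ones is `K` equals
`1 / Σ_{k=max(K−N0,0)}^{min(K,N1)} C(N0,K−k) C(N1,k) ρ^{k−k1}` with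
`ρ = (1−π₀)π₁ / (π₀(1−π₁))`. -/
theorem stmt15 (N0 N1 : ℕ)
    (p0 p1 : ENNReal) (h0l : 0 < p0) (h0u : p0 < 1) (h1l : 0 < p1) (h1u : p1 < 1)
    (Q : Measure (Fin (N0 + N1) → Bool))
    (hQ : Q = Measure.pi (fun i : Fin (N0 + N1) =>
      if (i : ℕ) < N0 then (PMF.bernoulli p0.toNNReal (by simpa using ENNReal.toNNReal_mono ENNReal.one_ne_top h0u.le)).toMeasure
      else (PMF.bernoulli p1.toNNReal (by simpa using ENNReal.toNNReal_mono ENNReal.one_ne_top h1u.le)).toMeasure))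
    (z : Fin (N0 + N1) → Bool) (K k0 k1 : ℕ)
    (hk0 : k0 = (Finset.univ.filter (fun i : Fin (N0 + N1) =>
      (i : ℕ) < N0 ∧ z i = true)).card)
    (hk1 : k1 = (Finset.univ.filter (fun i : Fin (N0 + N1) =>
      N0 ≤ (i : ℕ) ∧ z i = true)).card)
    (hK : k0 + k1 = K)
    (ρ : ENNReal) (hρ : ρ = (1 - p0) * p1 / (p0 * (1 - p1))) :
    Q[|{w : Fin (N0 + N1) → Bool |
        (Finset.univ.filter (fun i => w i = true)).card = K}] {z} =
      1 / ∑ k ∈ Finset.Icc (max (K - N0) 0) (min K N1),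
        (N0.choose (K - k) * N1.choose k : ENNReal) * ρ ^ ((k : ℤ) - (k1 : ℤ)) := by
  set P : Fin (N0 + N1) → Prop := fun i => (i : ℕ) < N0
  have hk1' : k1 = blockOnes (¬ P ·) z := by simp only [hk1, blockOnes, P, not_lt]
  have hz : #{i | z i = true} = K := by
    rw [card_true_eq_blockOnes_add P z, ← hK, hk0, hk1']
    rfl
  have hπ₀ : 0 < p0.toNNReal := ENNReal.toNNReal_pos h0l.ne' h0u.ne_top
  have hπ₁ : 0 < p1.toNNReal := ENNReal.toNNReal_pos h1l.ne' h1u.ne_top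
  have hπ₀' : p0.toNNReal < 1 := ENNReal.toNNReal_lt_of_lt_coe (by simpa using h0u)
  have hπ₁' : p1.toNNReal < 1 := ENNReal.toNNReal_lt_of_lt_coe (by simpa using h1u)
  have hρ' : ρ = oddsRatio p0.toNNReal p1.toNNReal := by
    rw [hρ, ENNReal.coe_oddsRatio hπ₀ hπ₁', ENNReal.coe_toNNReal h0u.ne_top,
      ENNReal.coe_toNNReal h1u.ne_top, oddsRatio]
  subst hQ
  refine (twoBlockBernoulli_cond_singleton P _ _ hπ₀ hπ₀' hπ₁ hπ₁' hz).trans ?_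
  rw [oddsRatioSum, Fin.card_filter_val_lt, min_eq_right (Nat.le_add_right N0 N1),
    Fin.card_filter_not_val_lt_add, ← hk1', Nat.max_zero, ENNReal.coe_finset_sum, hρ']
  simp only [ENNReal.coe_mul, ENNReal.coe_natCast,
    ENNReal.coe_zpow (NNReal.oddsRatio_pos hπ₀ hπ₀' hπ₁ hπ₁').ne']
end

section
/- Let P be a probability measure on Z^∞ under which the coordinates are i.i.d., where the marginal can be any probability measure on Z as P ranges over the null hypothesis (i.e., the null hypothesis contains all power measures R^∞). If S is a process adapted to the natural filtration that is a test supermartingale simultaneously under every such power measure R^∞, then S_n ≤ 1 for all n, R^∞-almost surely for every R. -/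
/-!
Fix a time `k` and write the supermartingale as `S_k = f(x)` and `S_{k+1} = g(x, y)`, where `x` is
the history up to time `k` and `y` the next observation. Under every power measure `ν^∞` the
supermartingale property says `∫ g(x, y) dν(y) ≤ f(x)` for `ν^{k+1}`-a.e. `x`. Given `R` and a
point `z`, apply this to the mixture `ν = t R + (1 - t) δ_z`: since `R ≪ ν`, it holds
`R^{k+1}`-a.e., and the atom at `z` gives `(1 - t) g(x, z) ≤ f(x)`. Letting `t → 0` and
integrating over `z` yields `S_{k+1} ≤ S_k` almost surely under `R^∞`, and induction from
`S_0 = 1` concludes.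
-/

open MeasureTheory ProbabilityTheory Filter
open scoped ENNReal Topology

theorem MeasureTheory.Measure.AbsolutelyContinuous.pi {n : ℕ} {α : Fin n → Type*}
    [∀ i, MeasurableSpace (α i)] {μ ν : ∀ i, Measure (α i)} [∀ i, SigmaFinite (μ i)]
    [∀ i, SigmaFinite (ν i)] (h : ∀ i, μ i ≪ ν i) : Measure.pi μ ≪ Measure.pi ν := by
  induction n with
  | zero => rw [Measure.pi_of_empty, Measure.pi_of_empty]
  | succ n ih =>
    rw [← (measurePreserving_piFinSuccAbove μ 0).symm.map_eq,
      ← (measurePreserving_piFinSuccAbove ν 0).symm.map_eq]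
    exact ((h 0).prod (ih fun i => h _)).map (MeasurableEquiv.piFinSuccAbove α 0).symm.measurable

theorem ENNReal.le_of_forall_one_sub_inv_mul_le {a b : ℝ≥0∞}
    (h : ∀ j : ℕ, (1 - ((j : ℝ≥0∞) + 1)⁻¹) * a ≤ b) : a ≤ b := by
  have h0 : Tendsto (fun j : ℕ => ((j : ℝ≥0∞) + 1)⁻¹) atTop (𝓝 0) := by
    simpa [Function.comp_def] using
      ENNReal.tendsto_inv_nat_nhds_zero.comp (tendsto_add_atTop_nat 1)
  have h1 : Tendsto (fun j : ℕ => (1 - ((j : ℝ≥0∞) + 1)⁻¹) * a) atTop (𝓝 a) := by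
    simpa using ENNReal.Tendsto.mul_const
      (ENNReal.Tendsto.sub tendsto_const_nhds h0 (Or.inl ENNReal.one_ne_top)) (by simp)
  exact le_of_tendsto' h1 h

theorem MeasureTheory.Supermartingale.setLIntegral_ofReal_le {ι Ω : Type*} [Preorder ι]
    {m0 : MeasurableSpace Ω} {μ : Measure Ω} [IsFiniteMeasure μ] {ℱ : Filtration ι m0}
    {f : ι → Ω → ℝ} (hf : Supermartingale f ℱ μ) (hnn : ∀ n ω, 0 ≤ f n ω) {i j : ι} (hij : i ≤ j)
    {s : Set Ω} (hs : MeasurableSet[ℱ i] s) :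
    ∫⁻ ω in s, ENNReal.ofReal (f j ω) ∂μ ≤ ∫⁻ ω in s, ENNReal.ofReal (f i ω) ∂μ := by
  rw [← ofReal_integral_eq_lintegral_ofReal (hf.integrable j).restrict (ae_of_all _ (hnn j)),
    ← ofReal_integral_eq_lintegral_ofReal (hf.integrable i).restrict (ae_of_all _ (hnn i))]
  exact ENNReal.ofReal_le_ofReal (hf.setIntegral_le hij hs)

theorem MeasureTheory.cylinderEvents_le_iff {ι : Type*} {X : ι → Type*} [∀ i, MeasurableSpace (X i)]
    {Δ : Set ι} {m : MeasurableSpace (∀ i, X i)} :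
    cylinderEvents Δ ≤ m ↔ ∀ i ∈ Δ, Measurable[m] (fun σ => σ i) := by
  simp only [cylinderEvents, iSup₂_le_iff, measurable_iff_comap_le]

section Mixture

variable {Z : Type*} [MeasurableSpace Z] {n : ℕ} {f : (Fin n → Z) → ℝ≥0∞}
  {g : (Fin n → Z) × Z → ℝ≥0∞}

theorem ae_one_sub_mul_le_of_forall_ae_lintegral_le (hg : Measurable g)
    (h : ∀ ν : Measure Z, IsProbabilityMeasure ν →
      ∀ᵐ x ∂(Measure.pi fun _ => ν), ∫⁻ y, g (x, y) ∂ν ≤ f x)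
    (R : Measure Z) [IsProbabilityMeasure R] {t : ℝ≥0∞} (ht0 : t ≠ 0) (ht1 : t ≤ 1) (z : Z) :
    ∀ᵐ x ∂(Measure.pi fun _ => R), (1 - t) * g (x, z) ≤ f x := by
  set ν := t • R + (1 - t) • Measure.dirac z
  have hν : IsProbabilityMeasure ν := ⟨by simp [ν, add_tsub_cancel_of_le ht1]⟩
  have hRν : R ≪ ν := (Measure.absolutelyContinuous_smul ht0).add_right _
  filter_upwards [(Measure.AbsolutelyContinuous.pi fun _ => hRν).ae_le (h ν hν)] with x hx
  calc (1 - t) * g (x, z) = ∫⁻ y, g (x, y) ∂((1 - t) • Measure.dirac z) := by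
        rw [lintegral_smul_measure, smul_eq_mul,
          lintegral_dirac' z (f := fun y => g (x, y)) (hg.comp measurable_prodMk_left)]
    _ ≤ ∫⁻ y, g (x, y) ∂ν := lintegral_mono' (Measure.le_add_left le_rfl) le_rfl
    _ ≤ f x := hx

theorem ae_le_of_forall_ae_lintegral_le (hf : Measurable f) (hg : Measurable g)
    (h : ∀ ν : Measure Z, IsProbabilityMeasure ν →
      ∀ᵐ x ∂(Measure.pi fun _ => ν), ∫⁻ y, g (x, y) ∂ν ≤ f x)
    (R : Measure Z) [IsProbabilityMeasure R] :
    ∀ᵐ p ∂(Measure.pi fun _ => R).prod R, g p ≤ f p.1 := by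
  have hz : ∀ z, ∀ᵐ x ∂(Measure.pi fun _ => R), g (x, z) ≤ f x := by
    intro z
    have hj (j : ℕ) := ae_one_sub_mul_le_of_forall_ae_lintegral_le hg h R
      (t := ((j : ℝ≥0∞) + 1)⁻¹) (by simp) (ENNReal.inv_le_one.2 le_add_self) z
    filter_upwards [ae_all_iff.2 hj] with x hx
    exact ENNReal.le_of_forall_one_sub_inv_mul_le hx
  have hmeas : MeasurableSet {p : (Fin n → Z) × Z | g p ≤ f p.1} :=
    measurableSet_le hg (hf.comp measurable_fst)
  rw [Measure.ae_prod_iff_ae_ae hmeas]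
  exact (Measure.ae_ae_comm hmeas).2 (ae_of_all _ hz)

end Mixture

section History

variable {Z : Type*} [MeasurableSpace Z]

def history (k : ℕ) (ω : ℕ → Z) : Fin (k + 1) → Z := fun i => ω i

@[fun_prop]
theorem measurable_history (k : ℕ) : Measurable (history (Z := Z) k) :=
  measurable_pi_lambda _ fun _ => measurable_pi_apply _

theorem cylinderEvents_Iic_eq_comap_history (k : ℕ) :
    cylinderEvents (Set.Iic k) = MeasurableSpace.pi.comap (history (Z := Z) k) := by
  refine le_antisymm (cylinderEvents_le_iff.2 fun i hi => ?_) ?_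
  · exact (measurable_pi_apply (X := fun _ : Fin (k + 1) => Z) ⟨i, Nat.lt_succ_of_le hi⟩).comp
      (comap_measurable (history k))
  · rw [← measurable_iff_comap_le]
    exact measurable_cylinderEvents_lambda (mα := cylinderEvents _) _
      fun i => measurable_cylinderEvent_apply (Nat.lt_succ_iff.1 i.2)

theorem cylinderEvents_Iic_succ_le_comap_history_prod (k : ℕ) :
    cylinderEvents (Set.Iic (k + 1)) ≤
      MeasurableSpace.comap (fun ω : ℕ → Z => (history k ω, ω (k + 1))) inferInstance := by
  refine cylinderEvents_le_iff.2 fun i hi => ?_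
  rcases (Set.mem_Iic.1 hi).lt_or_eq with hlt | rfl
  · exact ((measurable_pi_apply (X := fun _ : Fin (k + 1) => Z) ⟨i, hlt⟩).comp
      measurable_fst).comp (comap_measurable _)
  · exact measurable_snd.comp (comap_measurable _)

variable {μ : Measure (ℕ → Z)} {ν : Measure Z}

theorem indepFun_history_apply_succ (hiid : iIndepFun (fun n ω => ω n) μ) (k : ℕ) :
    IndepFun (history k) (fun ω => ω (k + 1)) μ := by
  have h := hiid.indepFun_finset (Finset.range (k + 1)) {k + 1} (by simp)
    fun i => measurable_pi_apply i
  exact h.comp (φ := fun (x : Finset.range (k + 1) → Z) (i : Fin (k + 1)) =>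
      x ⟨i, Finset.mem_range.2 i.2⟩)
    (ψ := fun (y : ({k + 1} : Finset ℕ) → Z) => y ⟨k + 1, Finset.mem_singleton_self _⟩)
    (by fun_prop) (measurable_pi_apply _)

variable [IsProbabilityMeasure μ]

theorem map_history_eq_pi (hiid : iIndepFun (fun n ω => ω n) μ)
    (hmarg : ∀ n, μ.map (fun ω => ω n) = ν) (k : ℕ) :
    μ.map (history k) = Measure.pi fun _ => ν := by
  have := (iIndepFun_iff_map_fun_eq_pi_map (f := fun (i : Fin (k + 1)) (ω : ℕ → Z) => ω i)
    fun i => (measurable_pi_apply _).aemeasurable).1 (hiid.precomp Fin.val_injective)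
  simp only [hmarg] at this
  exact this

theorem map_history_prod_apply_succ (hiid : iIndepFun (fun n ω => ω n) μ)
    (hmarg : ∀ n, μ.map (fun ω => ω n) = ν) (k : ℕ) :
    μ.map (fun ω => (history k ω, ω (k + 1))) = (Measure.pi fun _ => ν).prod ν := by
  rw [(indepFun_history_apply_succ hiid k).map_prod_eq_prod_map_map (by fun_prop)
      (measurable_pi_apply _).aemeasurable,
    map_history_eq_pi hiid hmarg, hmarg]

end History

section Step

variable {Z : Type*} [MeasurableSpace Z]
  {ℱ : Filtration ℕ (MeasurableSpace.pi : MeasurableSpace (ℕ → Z))} {S : ℕ → (ℕ → Z) → ℝ}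

theorem MeasureTheory.Supermartingale.ae_lintegral_next_le
    (hℱ : ∀ n, ℱ n = cylinderEvents (Set.Iic n)) (hnn : ∀ n ω, 0 ≤ S n ω)
    {μ : Measure (ℕ → Z)} [IsProbabilityMeasure μ] {ν : Measure Z} [IsProbabilityMeasure ν]
    (hiid : iIndepFun (fun n ω => ω n) μ) (hmarg : ∀ n, μ.map (fun ω => ω n) = ν)
    (hsuper : Supermartingale S ℱ μ) {k : ℕ} {f : (Fin (k + 1) → Z) → ℝ≥0∞}
    {g : (Fin (k + 1) → Z) × Z → ℝ≥0∞} (hf : Measurable f) (hg : Measurable g)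
    (hSf : (fun ω => ENNReal.ofReal (S k ω)) = f ∘ history k)
    (hSg : (fun ω => ENNReal.ofReal (S (k + 1) ω)) = g ∘ fun ω => (history k ω, ω (k + 1))) :
    ∀ᵐ x ∂(Measure.pi fun _ => ν), ∫⁻ y, g (x, y) ∂ν ≤ f x := by
  refine ae_le_of_forall_setLIntegral_le_of_sigmaFinite hg.lintegral_prod_right'
    fun B hB _ => ?_
  have hpast : MeasurableSet[ℱ k] (history k ⁻¹' B) := by
    rw [hℱ, cylinderEvents_Iic_eq_comap_history]
    exact ⟨B, hB, rfl⟩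
  calc ∫⁻ x in B, ∫⁻ y, g (x, y) ∂ν ∂(Measure.pi fun _ => ν)
      = ∫⁻ p in B ×ˢ Set.univ, g p ∂((Measure.pi fun _ => ν).prod ν) := by
        rw [setLIntegral_prod _ hg.aemeasurable, Measure.restrict_univ]
    _ = ∫⁻ ω in history k ⁻¹' B, ENNReal.ofReal (S (k + 1) ω) ∂μ := by
        rw [← map_history_prod_apply_succ hiid hmarg,
          setLIntegral_map (hB.prod MeasurableSet.univ) hg (by fun_prop), Set.mk_preimage_prod,
          Set.preimage_univ, Set.inter_univ, hSg]
        rfl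
    _ ≤ ∫⁻ ω in history k ⁻¹' B, ENNReal.ofReal (S k ω) ∂μ :=
        hsuper.setLIntegral_ofReal_le hnn k.le_succ hpast
    _ = ∫⁻ x in B, f x ∂(Measure.pi fun _ => ν) := by
        rw [hSf, ← map_history_eq_pi hiid hmarg, setLIntegral_map hB hf (measurable_history k)]
        rfl

theorem ae_succ_le_of_forall_supermartingale (hℱ : ∀ n, ℱ n = cylinderEvents (Set.Iic n))
    (P : Measure Z → Measure (ℕ → Z))
    (hPprob : ∀ R : Measure Z, IsProbabilityMeasure R → IsProbabilityMeasure (P R))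
    (hPiid : ∀ R : Measure Z, IsProbabilityMeasure R →
      iIndepFun (fun n (ω : ℕ → Z) => ω n) (P R))
    (hPmarg : ∀ R : Measure Z, IsProbabilityMeasure R →
      ∀ n, (P R).map (fun ω : ℕ → Z => ω n) = R)
    (hnn : ∀ n ω, 0 ≤ S n ω)
    (hsuper : ∀ R : Measure Z, IsProbabilityMeasure R → Supermartingale S ℱ (P R))
    (R : Measure Z) [hR : IsProbabilityMeasure R] (k : ℕ) :
    ∀ᵐ ω ∂(P R), S (k + 1) ω ≤ S k ω := by
  have := hPprob R hR
  have hadapted (j : ℕ) : Measurable[ℱ j] fun ω => ENNReal.ofReal (S j ω) :=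
    ((hsuper R hR).stronglyAdapted j).measurable.ennreal_ofReal
  have hk : Measurable[MeasurableSpace.pi.comap (history k)] fun ω => ENNReal.ofReal (S k ω) := by
    rw [← cylinderEvents_Iic_eq_comap_history, ← hℱ]
    exact hadapted k
  obtain ⟨f, hf, hSf⟩ := hk.exists_eq_measurable_comp
  have hk₁ := (hadapted (k + 1)).mono
    ((hℱ _).trans_le (cylinderEvents_Iic_succ_le_comap_history_prod k)) le_rfl
  obtain ⟨g, hg, hSg⟩ := hk₁.exists_eq_measurable_comp
  have hgf := ae_le_of_forall_ae_lintegral_le hf hg (fun ν hν =>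
    have := hPprob ν hν
    (hsuper ν hν).ae_lintegral_next_le hℱ hnn (hPiid ν hν) (hPmarg ν hν) hf hg hSf hSg) R
  rw [← map_history_prod_apply_succ (hPiid R hR) (hPmarg R hR)] at hgf
  filter_upwards [ae_of_ae_map (by fun_prop) hgf] with ω hω
  rw [← ENNReal.ofReal_le_ofReal_iff (hnn k ω)]
  exact (congrFun hSg ω).trans_le (hω.trans_eq (congrFun hSf ω).symm)

end Step

/-- No gambling against the model of randomness without forgetting (Theorem 17 of
Ramdas et al. 2022): if `S` is a test supermartingale, w.r.t. the natural filtration of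
the coordinate process on `Z^∞`, simultaneously under every i.i.d. (power) measure, then
`S_n ≤ 1` almost surely under every such measure. -/
theorem stmt19 {Z : Type*} [mZ : MeasurableSpace Z]
    (ℱ : Filtration ℕ (MeasurableSpace.pi : MeasurableSpace (ℕ → Z)))
    (hℱ : ∀ n, ℱ n = ⨆ i ∈ Set.Iic n, mZ.comap (fun ω : ℕ → Z => ω i))
    (P : Measure Z → Measure (ℕ → Z))
    (hPprob : ∀ R : Measure Z, IsProbabilityMeasure R → IsProbabilityMeasure (P R))
    (hPiid : ∀ R : Measure Z, IsProbabilityMeasure R →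
      iIndepFun (fun n (ω : ℕ → Z) => ω n) (P R))
    (hPmarg : ∀ R : Measure Z, IsProbabilityMeasure R →
      ∀ n, (P R).map (fun ω : ℕ → Z => ω n) = R)
    (S : ℕ → (ℕ → Z) → ℝ)
    (hnn : ∀ n ω, 0 ≤ S n ω)
    (hsuper : ∀ R : Measure Z, IsProbabilityMeasure R → Supermartingale S ℱ (P R))
    (hS0 : ∀ R : Measure Z, IsProbabilityMeasure R → S 0 =ᵐ[P R] (fun _ => 1)) :
    ∀ R : Measure Z, IsProbabilityMeasure R → ∀ n, ∀ᵐ ω ∂(P R), S n ω ≤ 1 := by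
  have hcyl : ∀ n, ℱ n = cylinderEvents (Set.Iic n) := hℱ
  intro R hR n
  induction n with
  | zero => filter_upwards [hS0 R hR] with ω h using h.le
  | succ k ih =>
    filter_upwards [ih, ae_succ_le_of_forall_supermartingale hcyl P hPprob hPiid hPmarg hnn hsuper
      R k] with ω hk hstep using hstep.trans hk
end
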